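/- For every integer d ≥ 1, the function x ↦ rect(Σ_{j=1}^d t(x_j) − 2(d−1)) on ℝ^d is Lebesgue integrable, and its integral I satisfies 2^{d+1} ≤ I ≤ 2·6^d. Consequently the normalizing constant C_d = 1/I exists and satisfies 6^{−d}/2 ≤ C_d ≤ 2^{−(d+1)}; moreover for d = 1 one has C_1 = 1/8. -/

import Mathlib

open MeasureTheory

/-- The rectifier (ReLU) function. -/
noncomputable def rect (x : ℝ) : ℝ := max 0 x

/-- The trapezoid function `t`. -/
noncomputable def trap (x : ℝ) : ℝ := rect (x + 3) - rect (x + 1) - rect (x - 1) + rect (x - 3)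

/-!
Writing `∑ t(xⱼ) - 2(d - 1) = 2 - ∑ (2 - t(xⱼ))` with every summand `2 - t(xⱼ) ∈ [0, 2]`, the
integrand equals `2` on the cube `[-1, 1]^d`, vanishes outside `[-3, 3]^d` (one summand is then `2`)
and lies in `[0, 2]` everywhere; comparing with the indicators of the two cubes gives
`2 · 2^d ≤ I ≤ 2 · 6^d`. For `d = 1` the integrand is `t` itself, whose integral is `8`.
-/

lemma rect_nonneg (x : ℝ) : 0 ≤ rect x := le_max_left _ _

lemma rect_of_nonneg {x : ℝ} (h : 0 ≤ x) : rect x = x := max_eq_right h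

lemma rect_of_nonpos {x : ℝ} (h : x ≤ 0) : rect x = 0 := max_eq_left h

lemma rect_le {x c : ℝ} (hx : x ≤ c) (hc : 0 ≤ c) : rect x ≤ c := max_le hc hx

lemma continuous_rect : Continuous rect := continuous_const.max continuous_id

lemma trap_mem_Icc (x : ℝ) : trap x ∈ Set.Icc 0 2 := by
  unfold trap
  rcases le_total (x + 3) 0 with h₁ | h₁ <;> rcases le_total (x + 1) 0 with h₂ | h₂ <;>
    rcases le_total (x - 1) 0 with h₃ | h₃ <;> rcases le_total (x - 3) 0 with h₄ | h₄ <;>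
    simp only [rect_of_nonneg, rect_of_nonpos, Set.mem_Icc, *] <;> constructor <;> linarith

lemma trap_eq_two {x : ℝ} (h : |x| ≤ 1) : trap x = 2 := by
  obtain ⟨h₁, h₂⟩ := abs_le.mp h
  rw [trap, rect_of_nonneg (by linarith), rect_of_nonneg (by linarith),
    rect_of_nonpos (by linarith), rect_of_nonpos (by linarith)]
  ring

lemma trap_eq_zero {x : ℝ} (h : 3 ≤ |x|) : trap x = 0 := by
  rcases le_abs'.mp h with h | h
  · rw [trap, rect_of_nonpos (by linarith), rect_of_nonpos (by linarith),
      rect_of_nonpos (by linarith), rect_of_nonpos (by linarith)]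
    ring
  · rw [trap, rect_of_nonneg (by linarith), rect_of_nonneg (by linarith),
      rect_of_nonneg (by linarith), rect_of_nonneg (by linarith)]
    ring

lemma trap_eq_add_three {x : ℝ} (h : x ∈ Set.Icc (-3) (-1)) : trap x = x + 3 := by
  obtain ⟨h₁, h₂⟩ := h
  rw [trap, rect_of_nonneg (by linarith), rect_of_nonpos (by linarith),
    rect_of_nonpos (by linarith), rect_of_nonpos (by linarith)]
  ring

lemma trap_eq_three_sub {x : ℝ} (h : x ∈ Set.Icc 1 3) : trap x = 3 - x := by
  obtain ⟨h₁, h₂⟩ := h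
  rw [trap, rect_of_nonneg (by linarith), rect_of_nonneg (by linarith),
    rect_of_nonneg (by linarith), rect_of_nonpos (by linarith)]
  ring

lemma continuous_trap : Continuous trap := by
  unfold trap
  have := continuous_rect
  fun_prop

lemma integral_trap : ∫ x, trap x = 8 := by
  have hsupp : ∀ x ∉ Set.Icc (-3 : ℝ) 3, trap x = 0 := fun x hx =>
    trap_eq_zero (le_of_lt (by simpa [Set.mem_Icc, ← abs_le, not_le] using hx))
  have hint (a b : ℝ) : IntervalIntegrable trap volume a b := continuous_trap.intervalIntegrable a b
  have left : ∫ x in (-3 : ℝ)..(-1), trap x = 2 := by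
    rw [intervalIntegral.integral_congr (g := fun x => x + 3)
      fun x hx => trap_eq_add_three (by rwa [Set.uIcc_of_le (by norm_num)] at hx)]
    norm_num [integral_id]
  have middle : ∫ x in (-1 : ℝ)..1, trap x = 4 := by
    rw [intervalIntegral.integral_congr (g := fun _ => 2)
      fun x hx => trap_eq_two (abs_le.mpr (by rwa [Set.uIcc_of_le (by norm_num)] at hx))]
    norm_num
  have right : ∫ x in (1 : ℝ)..3, trap x = 2 := by
    rw [intervalIntegral.integral_congr (g := fun x => 3 - x)
      fun x hx => trap_eq_three_sub (by rwa [Set.uIcc_of_le (by norm_num)] at hx)]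
    rw [intervalIntegral.integral_sub intervalIntegrable_const intervalIntegral.intervalIntegrable_id]
    norm_num [integral_id]
  rw [← setIntegral_eq_integral_of_forall_compl_eq_zero hsupp, integral_Icc_eq_integral_Ioc,
    ← intervalIntegral.integral_of_le (by norm_num),
    ← intervalIntegral.integral_add_adjacent_intervals (b := -1) (c := 3) (hint _ _) (hint _ _),
    ← intervalIntegral.integral_add_adjacent_intervals (a := -1) (b := 1) (hint _ _) (hint _ _),
    left, middle, right]
  norm_num

lemma Real.volume_real_Icc_neg_self_pi {ι : Type*} [Fintype ι] {a : ι → ℝ} (ha : 0 ≤ a) :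
    volume.real (Set.Icc (-a) a) = ∏ i, 2 * a i := by
  rw [measureReal_def, Real.volume_Icc_pi_toReal (neg_le_self ha)]
  simp [two_mul]

/-- The paper's `φ / C_d`, with `ℝ^d` replaced by `ι → ℝ`. -/
noncomputable def trapBump (ι : Type*) [Fintype ι] (x : ι → ℝ) : ℝ :=
  rect (∑ i, trap (x i) - 2 * ((Fintype.card ι : ℝ) - 1))

section TrapBump

variable {ι : Type*} [Fintype ι]

lemma trapBump_eq_rect_two_sub_sum (x : ι → ℝ) :
    trapBump ι x = rect (2 - ∑ i, (2 - trap (x i))) := by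
  rw [trapBump, Finset.sum_sub_distrib]
  simp only [Finset.sum_const, Finset.card_univ, nsmul_eq_mul]
  ring_nf

lemma trapBump_nonneg (x : ι → ℝ) : 0 ≤ trapBump ι x := rect_nonneg _

lemma trapBump_le_two (x : ι → ℝ) : trapBump ι x ≤ 2 := by
  have := Finset.sum_nonneg fun i (_ : i ∈ Finset.univ) => sub_nonneg.mpr (trap_mem_Icc (x i)).2
  rw [trapBump_eq_rect_two_sub_sum]
  exact rect_le (by linarith) zero_le_two

lemma trapBump_eq_two {x : ι → ℝ} (hx : x ∈ Set.Icc (-1) 1) : trapBump ι x = 2 := by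
  have h (i : ι) : 2 - trap (x i) = 0 := by
    rw [trap_eq_two (abs_le.mpr ⟨hx.1 i, hx.2 i⟩), sub_self]
  rw [trapBump_eq_rect_two_sub_sum, Finset.sum_eq_zero fun i _ => h i, sub_zero,
    rect_of_nonneg zero_le_two]

lemma trapBump_eq_zero {x : ι → ℝ} (hx : x ∉ Set.Icc (-3) 3) : trapBump ι x = 0 := by
  obtain ⟨i, hi⟩ : ∃ i, 3 < |x i| := by
    simpa [Set.mem_Icc, Pi.le_def, ← forall_and, ← abs_le] using hx
  have hsum : 2 - trap (x i) ≤ ∑ j, (2 - trap (x j)) :=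
    Finset.single_le_sum (fun j _ => sub_nonneg.mpr (trap_mem_Icc (x j)).2) (Finset.mem_univ i)
  rw [trap_eq_zero hi.le] at hsum
  rw [trapBump_eq_rect_two_sub_sum, rect_of_nonpos (by linarith)]

lemma continuous_trapBump : Continuous (trapBump ι) := by
  unfold trapBump
  have := continuous_rect
  have := continuous_trap
  fun_prop

lemma integrable_trapBump : Integrable (trapBump ι) :=
  continuous_trapBump.integrable_of_hasCompactSupport <|
    HasCompactSupport.of_support_subset_isCompact isCompact_Icc fun _ hx =>
      by_contra fun h => hx (trapBump_eq_zero h)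

lemma two_pow_succ_le_integral_trapBump :
    (2 : ℝ) ^ (Fintype.card ι + 1) ≤ ∫ x, trapBump ι x :=
  calc (2 : ℝ) ^ (Fintype.card ι + 1) = ∫ _ in Set.Icc (-1 : ι → ℝ) 1, (2 : ℝ) := by
        rw [setIntegral_const, Real.volume_real_Icc_neg_self_pi zero_le_one]
        simp [pow_succ]
    _ = ∫ x in Set.Icc (-1 : ι → ℝ) 1, trapBump ι x :=
        setIntegral_congr_fun measurableSet_Icc fun _ hx => (trapBump_eq_two hx).symm
    _ ≤ ∫ x, trapBump ι x :=
        setIntegral_le_integral integrable_trapBump (ae_of_all _ trapBump_nonneg)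

lemma integral_trapBump_le_two_mul_six_pow :
    ∫ x, trapBump ι x ≤ 2 * 6 ^ Fintype.card ι :=
  calc ∫ x, trapBump ι x = ∫ x in Set.Icc (-3 : ι → ℝ) 3, trapBump ι x :=
        (setIntegral_eq_integral_of_forall_compl_eq_zero fun _ hx => trapBump_eq_zero hx).symm
    _ ≤ ∫ _ in Set.Icc (-3 : ι → ℝ) 3, (2 : ℝ) :=
        setIntegral_mono_on integrable_trapBump.integrableOn
          (integrableOn_const isCompact_Icc.measure_lt_top.ne) measurableSet_Icc
          fun x _ => trapBump_le_two x
    _ = 2 * 6 ^ Fintype.card ι := by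
        rw [setIntegral_const, Real.volume_real_Icc_neg_self_pi (by intro; norm_num)]
        norm_num [mul_comm]

lemma integral_trapBump_of_unique [Unique ι] : ∫ x, trapBump ι x = 8 := by
  have h (x : ι → ℝ) : trapBump ι x = trap (MeasurableEquiv.funUnique ι ℝ x) := by
    simp [trapBump, rect_of_nonneg (trap_mem_Icc _).1]
  simp_rw [h]
  -- `convert` identifies the `Fintype ι` instance with the one `volume_preserving_funUnique`
  -- derives from `Unique ι`.
  convert (volume_preserving_funUnique ι ℝ).integral_comp' trap |>.trans integral_trap

end TrapBump

lemma EuclideanSpace.integrable_comp_ofLp_iff {ι E : Type*} [Fintype ι] [NormedAddCommGroup E]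
    {f : (ι → ℝ) → E} : Integrable (fun x : EuclideanSpace ℝ ι => f x.ofLp) ↔ Integrable f :=
  (EuclideanSpace.volume_preserving_symm_measurableEquiv_toLp ι).integrable_comp_emb
    (MeasurableEquiv.toLp 2 (ι → ℝ)).symm.measurableEmbedding

lemma EuclideanSpace.integral_comp_ofLp {ι E : Type*} [Fintype ι] [NormedAddCommGroup E]
    [NormedSpace ℝ E] (f : (ι → ℝ) → E) : ∫ x : EuclideanSpace ℝ ι, f x.ofLp = ∫ x, f x :=
  (EuclideanSpace.volume_preserving_symm_measurableEquiv_toLp ι).integral_comp' f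

theorem statement1 (d : ℕ) :
    Integrable (fun x : EuclideanSpace ℝ (Fin d) =>
      rect ((∑ j, trap (x j)) - 2 * ((d : ℝ) - 1))) ∧
    (2 : ℝ) ^ (d + 1) ≤
      (∫ x : EuclideanSpace ℝ (Fin d), rect ((∑ j, trap (x j)) - 2 * ((d : ℝ) - 1))) ∧
    (∫ x : EuclideanSpace ℝ (Fin d), rect ((∑ j, trap (x j)) - 2 * ((d : ℝ) - 1)))
      ≤ 2 * 6 ^ d ∧
    (6 : ℝ) ^ (-(d : ℤ)) / 2 ≤
      (∫ x : EuclideanSpace ℝ (Fin d), rect ((∑ j, trap (x j)) - 2 * ((d : ℝ) - 1)))⁻¹ ∧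
    (∫ x : EuclideanSpace ℝ (Fin d), rect ((∑ j, trap (x j)) - 2 * ((d : ℝ) - 1)))⁻¹
      ≤ (2 : ℝ) ^ (-((d : ℤ) + 1)) ∧
    (d = 1 →
      (∫ x : EuclideanSpace ℝ (Fin d), rect ((∑ j, trap (x j)) - 2 * ((d : ℝ) - 1)))⁻¹ = 1 / 8) := by
  have hφ : (fun x : EuclideanSpace ℝ (Fin d) => rect ((∑ j, trap (x j)) - 2 * ((d : ℝ) - 1))) =
      fun x => trapBump (Fin d) x.ofLp := by
    simp [trapBump]
  have hlow := two_pow_succ_le_integral_trapBump (ι := Fin d)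
  have hup := integral_trapBump_le_two_mul_six_pow (ι := Fin d)
  rw [Fintype.card_fin] at hlow hup
  have hpos : 0 < ∫ x, trapBump (Fin d) x := lt_of_lt_of_le (by positivity) hlow
  rw [hφ, EuclideanSpace.integral_comp_ofLp, EuclideanSpace.integrable_comp_ofLp_iff]
  refine ⟨integrable_trapBump, hlow, hup, ?_, ?_, ?_⟩
  · calc (6 : ℝ) ^ (-(d : ℤ)) / 2 = (2 * 6 ^ d)⁻¹ := by rw [zpow_neg, zpow_natCast]; ring
      _ ≤ _ := inv_anti₀ hpos hup
  · calc _ ≤ ((2 : ℝ) ^ (d + 1))⁻¹ := inv_anti₀ (by positivity) hlow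
      _ = (2 : ℝ) ^ (-((d : ℤ) + 1)) := by rw [← zpow_natCast, ← zpow_neg]; push_cast; rfl
  · rintro rfl
    rw [integral_trapBump_of_unique]
    norm_num
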